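/- arXiv:2405.05833 — 4 statements merged into one kernel-verified Lean document; each statement's English description precedes it below -/
import Mathlib

section
/- Let n ≥ 1, let C ⊆ ℝⁿ be a closed cone (t • x ∈ C whenever t > 0 and x ∈ C), and let ξ ∈ ℝⁿ satisfy ⟨x, ξ⟩ > 0 for every x ∈ C with x ≠ 0. Let d ≥ 0 be a real number and let f : ℝⁿ → ℝ be continuous and positively homogeneous of degree d (f(t • x) = t^d · f(x) for all t > 0 and x ∈ ℝⁿ). Then the function x ↦ exp(−⟨x, ξ⟩) · f(x) is Lebesgue-integrable on C. -/
set_option linter.unnecessarySimpa false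
open MeasureTheory RealInnerProductSpace Filter Real

-- one-variable bound: t^s e^{-ct} bounded on [1,∞)
lemma aux_bdd (s c : ℝ) (hc : 0 < c) :
    ∃ K : ℝ, 0 ≤ K ∧ ∀ u : ℝ, 1 ≤ u → u ^ s * Real.exp (-(c * u)) ≤ K := by
  have h := tendsto_rpow_mul_exp_neg_mul_atTop_nhds_zero s c hc
  have h1 : ∀ᶠ u in atTop, u ^ s * Real.exp (-c * u) ≤ 1 :=
    h.eventually_le_const one_pos
  obtain ⟨T, hT⟩ := eventually_atTop.mp h1
  set T' := max T 1 with hT'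
  have hne : (1 : ℝ) ≤ T' := le_max_right _ _
  have hcont : ContinuousOn (fun u : ℝ => u ^ s * Real.exp (-(c * u))) (Set.Icc 1 T') := by
    apply ContinuousOn.mul
    · exact ContinuousOn.rpow_const continuousOn_id
        (fun x hx => Or.inl (by have := hx.1; positivity))
    · exact (Real.continuous_exp.comp (continuous_const.mul continuous_id).neg).continuousOn
  obtain ⟨u₀, _, hu₀⟩ := (isCompact_Icc).exists_isMaxOn ⟨1, Set.mem_Icc.mpr ⟨le_refl 1, hne⟩⟩ hcont
  refine ⟨max (u₀ ^ s * Real.exp (-(c * u₀))) 1, le_trans zero_le_one (le_max_right _ _), ?_⟩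
  intro u hu
  rcases le_or_gt u T' with h' | h'
  · exact le_trans (hu₀ (Set.mem_Icc.mpr ⟨hu, h'⟩)) (le_max_left _ _)
  · refine le_trans ?_ (le_max_right _ _)
    have := hT u (le_trans (le_max_left T 1) h'.le)
    rwa [neg_mul] at this

lemma aux_maj (c : ℝ) (hc : 0 < c) (d : ℝ) (hd : 0 ≤ d) (r : ℝ) :
    ∃ K : ℝ, 0 ≤ K ∧ ∀ t : ℝ, 0 ≤ t →
      t ^ d * Real.exp (-(c * t)) ≤ K * (1 + t) ^ (-r) := by
  obtain ⟨K₀, hK₀, hK⟩ := aux_bdd (d + r) c hc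
  refine ⟨K₀ * Real.exp c, by positivity, ?_⟩
  intro t ht
  have hu : (1 : ℝ) ≤ 1 + t := by linarith
  have hu0 : (0 : ℝ) < 1 + t := by linarith
  rw [Real.rpow_neg hu0.le, ← div_eq_mul_inv, le_div_iff₀ (Real.rpow_pos_of_pos hu0 r)]
  have h1 : t ^ d ≤ (1 + t) ^ d := Real.rpow_le_rpow ht (by linarith) hd
  have h2 : Real.exp (-(c * t)) = Real.exp c * Real.exp (-(c * (1 + t))) := by
    rw [← Real.exp_add]; ring_nf
  calc t ^ d * Real.exp (-(c * t)) * (1 + t) ^ r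
      ≤ (1 + t) ^ d * Real.exp (-(c * t)) * (1 + t) ^ r := by
        gcongr
    _ = ((1 + t) ^ (d + r) * Real.exp (-(c * (1 + t)))) * Real.exp c := by
        rw [h2, Real.rpow_add hu0]; ring
    _ ≤ K₀ * Real.exp c := by
        gcongr
        exact hK _ hu

theorem cone_exp_homogeneous_integrable
    (n : ℕ) (hn : 1 ≤ n)
    (C : Set (EuclideanSpace ℝ (Fin n)))
    (hCclosed : IsClosed C)
    (hCcone : ∀ t : ℝ, 0 < t → ∀ x ∈ C, t • x ∈ C)
    (ξ : EuclideanSpace ℝ (Fin n))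
    (hξ : ∀ x ∈ C, x ≠ 0 → 0 < ⟪x, ξ⟫)
    (d : ℝ) (hd : 0 ≤ d)
    (f : EuclideanSpace ℝ (Fin n) → ℝ)
    (hf : Continuous f)
    (hhom : ∀ t : ℝ, 0 < t → ∀ x, f (t • x) = t ^ d * f x) :
    IntegrableOn (fun x => Real.exp (-⟪x, ξ⟫) * f x) C volume := by
  haveI : Nonempty (Fin n) := ⟨⟨0, hn⟩⟩
  haveI : Nontrivial (EuclideanSpace ℝ (Fin n)) := inferInstance
  have hvol0 : (volume : Measure (EuclideanSpace ℝ (Fin n))) {0} = 0 := measure_singleton 0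
  by_cases hK : (C ∩ Metric.sphere 0 1).Nonempty
  · -- main case
    -- lower bound c for the inner product on the compact set C ∩ sphere
    have hKcpt : IsCompact (C ∩ Metric.sphere 0 1) :=
      (isCompact_sphere (0 : EuclideanSpace ℝ (Fin n)) 1).inter_left hCclosed
    have hinner_cont : Continuous fun x : EuclideanSpace ℝ (Fin n) => ⟪x, ξ⟫ :=
      continuous_id.inner continuous_const
    obtain ⟨x₀, hx₀mem, hx₀min⟩ := hKcpt.exists_isMinOn hK hinner_cont.continuousOn
    set c : ℝ := ⟪x₀, ξ⟫ with hc_def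
    have hc : 0 < c := hξ x₀ hx₀mem.1 (by
      intro h; simpa [h] using hx₀mem.2)
    -- bound M for |f| on the sphere
    have hsph : (Metric.sphere (0 : EuclideanSpace ℝ (Fin n)) 1).Nonempty :=
      NormedSpace.sphere_nonempty.mpr zero_le_one
    obtain ⟨y₀, _, hy₀max⟩ := (isCompact_sphere (0 : EuclideanSpace ℝ (Fin n)) 1).exists_isMaxOn
      hsph (hf.norm.continuousOn)
    set M : ℝ := ‖f y₀‖ with hM_def
    have hM : 0 ≤ M := norm_nonneg _
    -- pointwise bounds for nonzero x ∈ C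
    have key : ∀ x ∈ C, x ≠ 0 →
        ‖Real.exp (-⟪x, ξ⟫) * f x‖ ≤ M * (‖x‖ ^ d * Real.exp (-(c * ‖x‖))) := by
      intro x hx hx0
      have hxn : (0:ℝ) < ‖x‖ := norm_pos_iff.mpr hx0
      have hunit : ‖(‖x‖⁻¹ • x)‖ = 1 := by
        simp [norm_smul, abs_of_pos (inv_pos.mpr hxn), inv_mul_cancel₀ hxn.ne']
      have hxx : ‖x‖ • (‖x‖⁻¹ • x) = x := by
        rw [smul_smul, mul_inv_cancel₀ hxn.ne', one_smul]
      -- |f x| ≤ M * ‖x‖ ^ d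
      have hfx : ‖f x‖ ≤ ‖x‖ ^ d * M := by
        have := hhom ‖x‖ hxn (‖x‖⁻¹ • x)
        rw [hxx] at this
        rw [this, norm_mul, Real.norm_rpow_of_nonneg hxn.le, Real.norm_eq_abs,
          abs_of_pos hxn]
        exact mul_le_mul_of_nonneg_left
          (hy₀max (by simpa using hunit)) (Real.rpow_nonneg hxn.le d)
      -- ⟪x, ξ⟫ ≥ c * ‖x‖
      have hip : c * ‖x‖ ≤ ⟪x, ξ⟫ := by
        have hmem : ‖x‖⁻¹ • x ∈ C ∩ Metric.sphere 0 1 :=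
          ⟨hCcone _ (inv_pos.mpr hxn) x hx, by simpa using hunit⟩
        have h1 : c ≤ ⟪‖x‖⁻¹ • x, ξ⟫ := hx₀min hmem
        have h2 : ⟪‖x‖⁻¹ • x, ξ⟫ = ‖x‖⁻¹ * ⟪x, ξ⟫ := real_inner_smul_left _ _ _
        rw [h2] at h1
        calc c * ‖x‖ ≤ (‖x‖⁻¹ * ⟪x, ξ⟫) * ‖x‖ := by
              exact mul_le_mul_of_nonneg_right h1 hxn.le
          _ = ⟪x, ξ⟫ := by field_simp
      have hexp : Real.exp (-⟪x, ξ⟫) ≤ Real.exp (-(c * ‖x‖)) :=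
        Real.exp_le_exp.mpr (by linarith)
      calc ‖Real.exp (-⟪x, ξ⟫) * f x‖ = Real.exp (-⟪x, ξ⟫) * ‖f x‖ := by
            rw [norm_mul, Real.norm_eq_abs, abs_of_pos (Real.exp_pos _)]
        _ ≤ Real.exp (-(c * ‖x‖)) * (‖x‖ ^ d * M) := by
            exact mul_le_mul hexp hfx (norm_nonneg _) (Real.exp_pos _).le
        _ = M * (‖x‖ ^ d * Real.exp (-(c * ‖x‖))) := by ring
    -- majorant
    obtain ⟨K, hKnn, hKb⟩ := aux_maj c hc d hd (n + 1)
    have hfr : (Module.finrank ℝ (EuclideanSpace ℝ (Fin n)) : ℝ) < (n : ℝ) + 1 := by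
      rw [finrank_euclideanSpace_fin]; linarith
    have hmaj : Integrable
        (fun x : EuclideanSpace ℝ (Fin n) => (M * K) * (1 + ‖x‖) ^ (-((n : ℝ) + 1)))
        volume := (integrable_one_add_norm hfr).const_mul _
    refine Integrable.mono' hmaj.integrableOn ?_ ?_
    · exact ((Real.continuous_exp.comp hinner_cont.neg).mul hf).aestronglyMeasurable
    · have hae0 : ∀ᵐ x ∂(volume.restrict C), x ≠ (0 : EuclideanSpace ℝ (Fin n)) := by
        have h0 : (volume.restrict C) {(0 : EuclideanSpace ℝ (Fin n))} = 0 :=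
          le_antisymm (le_trans (Measure.restrict_le_self _) hvol0.le) zero_le
        rw [ae_iff]
        simpa using h0
      filter_upwards [ae_restrict_mem hCclosed.measurableSet, hae0] with x hxC hx0
      calc ‖Real.exp (-⟪x, ξ⟫) * f x‖
          ≤ M * (‖x‖ ^ d * Real.exp (-(c * ‖x‖))) := key x hxC hx0
        _ ≤ M * (K * (1 + ‖x‖) ^ (-((n : ℝ) + 1))) := by
            exact mul_le_mul_of_nonneg_left (hKb _ (norm_nonneg x)) hM
        _ = (M * K) * (1 + ‖x‖) ^ (-((n : ℝ) + 1)) := by ring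
  · -- C ⊆ {0}
    have hsub : C ⊆ {0} := by
      intro x hx
      by_contra hx0
      have hx0' : x ≠ 0 := hx0
      have hxn : (0:ℝ) < ‖x‖ := norm_pos_iff.mpr hx0'
      refine hK ⟨‖x‖⁻¹ • x, hCcone _ (by positivity) x hx, ?_⟩
      simp [norm_smul, abs_of_pos (inv_pos.mpr hxn), inv_mul_cancel₀ hxn.ne']
    have : volume C = 0 := measure_mono_null hsub hvol0
    rw [IntegrableOn, Measure.restrict_eq_zero.mpr this]
    exact integrable_zero_measure
end

section
/- Let n ≥ 1, let C ⊆ ℝⁿ be a closed cone (t • x ∈ C whenever t > 0 and x ∈ C), let d ≥ 0 be a real number, and let f : ℝⁿ → ℝ be continuous and positively homogeneous of degree d. Define V : ℝⁿ → ℝ by V(ξ) = ∫_C exp(−⟨x, ξ⟩) · f(x) dx. Let ξ₀ ∈ ℝⁿ satisfy ⟨x, ξ₀⟩ > 0 for every x ∈ C with x ≠ 0, and let w ∈ ℝⁿ be the (Bochner) integral w = ∫_C exp(−⟨x, ξ₀⟩) · f(x) • x dx. Then V is Fréchet-differentiable at ξ₀ with derivative the linear map ν ↦ −⟨w, ν⟩;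 equivalently, the directional derivative of V at ξ₀ along ν equals −∫_C ⟨x, ν⟩ · exp(−⟨x, ξ₀⟩) · f(x) dx. -/
open MeasureTheory RealInnerProductSpace Real Set

set_option maxHeartbeats 1000000
set_option synthInstance.maxHeartbeats 200000

section aux
lemma aux_exp_abs_int1 : Integrable (fun t : ℝ => Real.exp (-|t|)) := by
  rw [← integrableOn_univ, ← Iic_union_Ioi (a := (0:ℝ)), integrableOn_union]
  constructor
  · refine (integrableOn_exp_Iic 0).congr_fun (fun t ht => ?_) measurableSet_Iic
    rw [abs_of_nonpos ht, neg_neg]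
  · refine (exp_neg_integrableOn_Ioi 0 one_pos).congr_fun (fun t ht => ?_) measurableSet_Ioi
    rw [abs_of_pos ht]; ring_nf

lemma aux_exp_abs_int {c : ℝ} (hc : 0 < c) :
    Integrable (fun t : ℝ => Real.exp (-(c * |t|))) := by
  have h := (integrable_comp_mul_left_iff (fun t : ℝ => Real.exp (-|t|)) hc.ne').2 aux_exp_abs_int1
  simpa [abs_mul, abs_of_pos hc] using h

lemma aux_coord_le_norm {n : ℕ} (x : EuclideanSpace ℝ (Fin n)) (i : Fin n) : |x i| ≤ ‖x‖ := by
  rw [EuclideanSpace.norm_eq]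
  rw [show |x i| = Real.sqrt (|x i|^2) by rw [Real.sqrt_sq_eq_abs, abs_abs]]
  apply Real.sqrt_le_sqrt
  exact Finset.single_le_sum (f := fun j => |x j|^2) (fun j _ => sq_nonneg _) (Finset.mem_univ i)

lemma aux_exp_norm_int {n : ℕ} (hn : 1 ≤ n) {b : ℝ} (hb : 0 < b) :
    Integrable (fun x : EuclideanSpace ℝ (Fin n) => Real.exp (-(b * ‖x‖))) := by
  have hbn : 0 < b / n := div_pos hb (by exact_mod_cast hn)
  have key : Integrable (fun y : Fin n → ℝ => ∏ i, Real.exp (-(b/n * |y i|))) :=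
    Integrable.fintype_prod (f := fun (_ : Fin n) (t : ℝ) => Real.exp (-(b/n * |t|)))
      (fun _ => aux_exp_abs_int hbn)
  have vp := EuclideanSpace.volume_preserving_symm_measurableEquiv_toLp (ι := Fin n)
  have key2 : Integrable (fun x : EuclideanSpace ℝ (Fin n) => ∏ i, Real.exp (-(b/n * |x i|))) := by
    have := vp.integrable_comp (g := fun y : Fin n → ℝ => ∏ i, Real.exp (-(b/n * |y i|)))
      (by
        apply Continuous.aestronglyMeasurable
        exact continuous_finset_prod _ (fun i _ => by fun_prop))
    exact this.2 key
  refine key2.mono' ?_ ?_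
  · exact (Real.continuous_exp.comp (by fun_prop)).aestronglyMeasurable
  · refine Filter.Eventually.of_forall (fun x => ?_)
    rw [Real.norm_eq_abs, abs_of_pos (Real.exp_pos _), ← Real.exp_sum]
    apply Real.exp_le_exp.2
    rw [Finset.sum_neg_distrib]
    apply neg_le_neg
    calc ∑ i, b/n * |x i| ≤ ∑ _i : Fin n, b/n * ‖x‖ := by
          exact Finset.sum_le_sum (fun i _ => mul_le_mul_of_nonneg_left (aux_coord_le_norm x i) hbn.le)
      _ = b * ‖x‖ := by
          rw [Finset.sum_const, Finset.card_univ, Fintype.card_fin, nsmul_eq_mul]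
          field_simp

lemma aux_rpow_le_exp {p b : ℝ} (hp : 0 < p) (hb : 0 < b) (r : ℝ) (hr : 0 ≤ r) :
    r ^ p ≤ (p/b) ^ p * Real.exp (b * r) := by
  have hs : 0 ≤ b * r / p := by positivity
  have h1 : r = (p/b) * (b * r / p) := by field_simp
  calc r ^ p = ((p/b) * (b * r / p)) ^ p := by rw [← h1]
    _ = (p/b) ^ p * (b * r / p) ^ p := Real.mul_rpow (by positivity) hs
    _ ≤ (p/b) ^ p * Real.exp (b * r / p) ^ p := by
        apply mul_le_mul_of_nonneg_left _ (by positivity)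
        exact Real.rpow_le_rpow hs (Real.add_one_le_exp _ |>.trans' (by linarith)) hp.le
    _ = (p/b) ^ p * Real.exp (b * r) := by
        congr 1
        rw [← Real.exp_one_rpow (b * r / p), ← Real.rpow_mul (Real.exp_pos 1).le,
          div_mul_cancel₀ _ hp.ne', Real.exp_one_rpow]

lemma aux_main_int {n : ℕ} (hn : 1 ≤ n) {p b : ℝ} (hp : 0 ≤ p) (hb : 0 < b) :
    Integrable (fun x : EuclideanSpace ℝ (Fin n) => ‖x‖ ^ p * Real.exp (-(b * ‖x‖))) := by
  rcases eq_or_lt_of_le hp with h | h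
  · simpa [← h] using aux_exp_norm_int hn hb
  · have hb2 : 0 < b / 2 := by linarith
    refine ((aux_exp_norm_int hn hb2).const_mul ((p/(b/2)) ^ p)).mono' ?_ ?_
    · exact ((continuous_norm.rpow_const (fun x => Or.inr hp)).mul
        (Real.continuous_exp.comp (by fun_prop))).aestronglyMeasurable
    · refine Filter.Eventually.of_forall (fun x => ?_)
      rw [Real.norm_eq_abs, abs_mul, abs_of_nonneg (Real.rpow_nonneg (norm_nonneg _) _),
        abs_of_pos (Real.exp_pos _)]
      calc ‖x‖ ^ p * Real.exp (-(b * ‖x‖))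
          ≤ ((p/(b/2)) ^ p * Real.exp (b/2 * ‖x‖)) * Real.exp (-(b * ‖x‖)) :=
            mul_le_mul_of_nonneg_right (aux_rpow_le_exp h hb2 _ (norm_nonneg _)) (Real.exp_pos _).le
        _ = (p/(b/2)) ^ p * Real.exp (-(b/2 * ‖x‖)) := by
            rw [mul_assoc, ← Real.exp_add]; ring_nf
end aux

theorem weighted_volume_hasFDerivAt
    (n : ℕ) (hn : 1 ≤ n)
    (C : Set (EuclideanSpace ℝ (Fin n)))
    (hCclosed : IsClosed C)
    (hCcone : ∀ t : ℝ, 0 < t → ∀ x ∈ C, t • x ∈ C)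
    (d : ℝ) (hd : 0 ≤ d)
    (f : EuclideanSpace ℝ (Fin n) → ℝ)
    (hf : Continuous f)
    (hhom : ∀ t : ℝ, 0 < t → ∀ x, f (t • x) = t ^ d * f x)
    (V : EuclideanSpace ℝ (Fin n) → ℝ)
    (hV : ∀ ξ, V ξ = ∫ x in C, Real.exp (-⟪x, ξ⟫) * f x)
    (ξ₀ : EuclideanSpace ℝ (Fin n))
    (hξ₀ : ∀ x ∈ C, x ≠ 0 → 0 < ⟪x, ξ₀⟫)
    (w : EuclideanSpace ℝ (Fin n))
    (hw : w = ∫ x in C, (Real.exp (-⟪x, ξ₀⟫) * f x) • x) :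
    HasFDerivAt V (-(innerSL ℝ w)) ξ₀ := by
  have hCm : MeasurableSet C := hCclosed.measurableSet
  -- lower bound on the inner product
  obtain ⟨c, hc0, hc⟩ : ∃ c, 0 < c ∧ ∀ x ∈ C, c * ‖x‖ ≤ ⟪x, ξ₀⟫ := by
    have sphere_mem : ∀ x ∈ C, x ≠ 0 → (‖x‖⁻¹ • x) ∈ C ∩ Metric.sphere (0 : EuclideanSpace ℝ (Fin n)) 1 := by
      intro x hx hx0
      have hxn : (0:ℝ) < ‖x‖ := norm_pos_iff.2 hx0
      refine ⟨hCcone _ (inv_pos.2 hxn) x hx, ?_⟩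
      simp [norm_smul, abs_of_pos (inv_pos.2 hxn), inv_mul_cancel₀ hxn.ne']
    have key : ∀ c, 0 < c → (∀ y ∈ C ∩ Metric.sphere (0 : EuclideanSpace ℝ (Fin n)) 1, c ≤ ⟪y, ξ₀⟫) →
        ∀ x ∈ C, c * ‖x‖ ≤ ⟪x, ξ₀⟫ := by
      intro c hc0 hcy x hx
      rcases eq_or_ne x 0 with rfl | hx0
      · simp
      · have hxn : (0:ℝ) < ‖x‖ := norm_pos_iff.2 hx0
        have hu := hcy _ (sphere_mem x hx hx0)
        have hinner : ⟪x, ξ₀⟫ = ‖x‖ * ⟪‖x‖⁻¹ • x, ξ₀⟫ := by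
          rw [real_inner_smul_left]; field_simp
        rw [hinner]
        nlinarith [hu, hxn]
    by_cases hne : (C ∩ Metric.sphere (0 : EuclideanSpace ℝ (Fin n)) 1).Nonempty
    · have hK : IsCompact (C ∩ Metric.sphere (0 : EuclideanSpace ℝ (Fin n)) 1) :=
        (isCompact_sphere (0 : EuclideanSpace ℝ (Fin n)) 1).inter_left hCclosed
      obtain ⟨z, hz, hzmin⟩ := hK.exists_isMinOn (f := fun y : EuclideanSpace ℝ (Fin n) => ⟪y, ξ₀⟫)
        hne ((continuous_id.inner continuous_const).continuousOn)
      have hz0 : z ≠ 0 := by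
        intro h
        have := hz.2
        rw [h] at this
        simp at this
      refine ⟨⟪z, ξ₀⟫, hξ₀ z hz.1 hz0, key _ (hξ₀ z hz.1 hz0) (fun y hy => isMinOn_iff.1 hzmin y hy)⟩
    · refine ⟨1, one_pos, key 1 one_pos (fun y hy => absurd ⟨y, hy⟩ hne)⟩
  -- upper bound on f
  obtain ⟨M₀, hM₀⟩ : ∃ M₀, ∀ y ∈ C ∩ Metric.sphere (0 : EuclideanSpace ℝ (Fin n)) 1, ‖f y‖ ≤ M₀ := by
    have hK : IsCompact (C ∩ Metric.sphere (0 : EuclideanSpace ℝ (Fin n)) 1) :=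
      (isCompact_sphere (0 : EuclideanSpace ℝ (Fin n)) 1).inter_left hCclosed
    exact hK.exists_bound_of_continuousOn hf.continuousOn
  set M : ℝ := max M₀ |f 0| with hM_def
  have hM0 : 0 ≤ M := le_trans (abs_nonneg _) (le_max_right _ _)
  have hfb : ∀ x ∈ C, |f x| ≤ M * ‖x‖ ^ d := by
    intro x hx
    rcases eq_or_ne x 0 with rfl | hx0
    · rcases eq_or_lt_of_le hd with h | h
      · simp only [norm_zero, ← h, Real.rpow_zero, mul_one]
        exact le_trans (le_max_right _ _) le_rfl
      · have hf0 : f 0 = 0 := by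
          have h2 := hhom 2 two_pos 0
          rw [smul_zero] at h2
          have h2d : (1:ℝ) < 2 ^ d := Real.one_lt_rpow_iff_of_pos two_pos |>.2 (Or.inl ⟨one_lt_two, h⟩)
          have h3 : (2 ^ d - 1) * f 0 = 0 := by linear_combination (-1 : ℝ) * h2
          rcases mul_eq_zero.1 h3 with h4 | h4
          · linarith
          · exact h4
        simp [hf0, Real.zero_rpow h.ne']
    · have hxn : (0:ℝ) < ‖x‖ := norm_pos_iff.2 hx0
      have hu : (‖x‖⁻¹ • x) ∈ C ∩ Metric.sphere (0 : EuclideanSpace ℝ (Fin n)) 1 := by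
        refine ⟨hCcone _ (inv_pos.2 hxn) x hx, ?_⟩
        simp [norm_smul, abs_of_pos (inv_pos.2 hxn), inv_mul_cancel₀ hxn.ne']
      have heq : f x = ‖x‖ ^ d * f (‖x‖⁻¹ • x) := by
        have := hhom ‖x‖ hxn (‖x‖⁻¹ • x)
        rwa [smul_inv_smul₀ hxn.ne'] at this
      rw [heq, abs_mul, abs_of_nonneg (Real.rpow_nonneg hxn.le _), mul_comm]
      apply mul_le_mul_of_nonneg_right _ (Real.rpow_nonneg hxn.le _)
      exact le_trans (hM₀ _ hu) (le_max_left _ _)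
  -- the rpow identity
  have hrd : ∀ x : EuclideanSpace ℝ (Fin n), ‖x‖ ^ d * ‖x‖ = ‖x‖ ^ (d+1) := by
    intro x
    rcases eq_or_ne (‖x‖) 0 with h | h
    · rw [h, Real.zero_rpow (by linarith : d + 1 ≠ 0), mul_zero]
    · rw [Real.rpow_add_one h]
  -- continuity facts
  have hcont : ∀ ξ : EuclideanSpace ℝ (Fin n), Continuous (fun x : EuclideanSpace ℝ (Fin n) => Real.exp (-⟪x, ξ⟫) * f x) := fun ξ =>
    (Real.continuous_exp.comp (continuous_id.inner continuous_const).neg).mul hf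
  -- integrability of F ξ₀
  have hF_int : Integrable (fun x : EuclideanSpace ℝ (Fin n) => Real.exp (-⟪x, ξ₀⟫) * f x) (volume.restrict C) := by
    refine (((aux_main_int hn hd hc0).const_mul M).restrict (s := C)).mono'
      ((hcont ξ₀).aestronglyMeasurable.restrict) ?_
    rw [ae_restrict_iff' hCm]
    refine Filter.Eventually.of_forall (fun x hx => ?_)
    rw [Real.norm_eq_abs, abs_mul, abs_of_pos (Real.exp_pos _)]
    have h1 : Real.exp (-⟪x, ξ₀⟫) ≤ Real.exp (-(c * ‖x‖)) :=
      Real.exp_le_exp.2 (neg_le_neg (hc x hx))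
    calc Real.exp (-⟪x, ξ₀⟫) * |f x| ≤ Real.exp (-(c * ‖x‖)) * (M * ‖x‖ ^ d) :=
          mul_le_mul h1 (hfb x hx) (abs_nonneg _) (Real.exp_pos _).le
      _ = M * (‖x‖ ^ d * Real.exp (-(c * ‖x‖))) := by ring
  -- integrability of the vector-valued integrand
  have hInt : Integrable (fun x : EuclideanSpace ℝ (Fin n) => (Real.exp (-⟪x, ξ₀⟫) * f x) • x) (volume.restrict C) := by
    refine (((aux_main_int hn (by linarith : (0:ℝ) ≤ d+1) hc0).const_mul M).restrict
      (s := C)).mono' (((hcont ξ₀).smul continuous_id).aestronglyMeasurable.restrict) ?_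
    rw [ae_restrict_iff' hCm]
    refine Filter.Eventually.of_forall (fun x hx => ?_)
    rw [norm_smul, Real.norm_eq_abs, abs_mul, abs_of_pos (Real.exp_pos _)]
    have h1 : Real.exp (-⟪x, ξ₀⟫) ≤ Real.exp (-(c * ‖x‖)) :=
      Real.exp_le_exp.2 (neg_le_neg (hc x hx))
    calc Real.exp (-⟪x, ξ₀⟫) * |f x| * ‖x‖
        ≤ Real.exp (-(c * ‖x‖)) * (M * ‖x‖ ^ d) * ‖x‖ := by
          apply mul_le_mul_of_nonneg_right _ (norm_nonneg _)
          exact mul_le_mul h1 (hfb x hx) (abs_nonneg _) (Real.exp_pos _).le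
      _ = M * (‖x‖ ^ d * ‖x‖) * Real.exp (-(c * ‖x‖)) := by ring
      _ = M * (‖x‖ ^ (d+1) * Real.exp (-(c * ‖x‖))) := by rw [hrd x]; ring
  -- main application
  have main := hasFDerivAt_integral_of_dominated_of_fderiv_le
    (μ := volume.restrict C)
    (F := fun (ξ : EuclideanSpace ℝ (Fin n)) (x : EuclideanSpace ℝ (Fin n)) => Real.exp (-⟪x, ξ⟫) * f x)
    (F' := fun (ξ : EuclideanSpace ℝ (Fin n)) (x : EuclideanSpace ℝ (Fin n)) =>
      f x • (Real.exp (-⟪x, ξ⟫) • -(innerSL ℝ x : EuclideanSpace ℝ (Fin n) →L[ℝ] ℝ)))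
    (x₀ := ξ₀)
    (bound := fun x => M * (‖x‖ ^ (d+1) * Real.exp (-(c/2 * ‖x‖))))
    (Metric.ball_mem_nhds ξ₀ (half_pos hc0))
    (Filter.Eventually.of_forall (fun ξ => (hcont ξ).aestronglyMeasurable.restrict))
    hF_int
    (by
      apply Continuous.aestronglyMeasurable ?_ |>.restrict
      exact hf.smul ((Real.continuous_exp.comp
        (continuous_id.inner continuous_const).neg).smul (innerSL ℝ).continuous.neg))
    (by
      rw [ae_restrict_iff' hCm]
      refine Filter.Eventually.of_forall (fun x hx => ?_)
      intro ξ hξ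
      have hip : c/2 * ‖x‖ ≤ ⟪x, ξ⟫ := by
        have h1 : ⟪x, ξ⟫ = ⟪x, ξ₀⟫ + ⟪x, ξ - ξ₀⟫ := by
          rw [← inner_add_right]; congr 1; abel
        have h2 : |⟪x, ξ - ξ₀⟫| ≤ ‖x‖ * ‖ξ - ξ₀‖ := abs_real_inner_le_norm _ _
        have h3 : ‖ξ - ξ₀‖ < c/2 := by
          rw [← dist_eq_norm]; exact Metric.mem_ball.1 hξ
        have h4 : c * ‖x‖ ≤ ⟪x, ξ₀⟫ := hc x hx
        have h5 : ‖x‖ * ‖ξ - ξ₀‖ ≤ ‖x‖ * (c/2) :=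
          mul_le_mul_of_nonneg_left h3.le (norm_nonneg _)
        nlinarith [abs_le.1 h2]
      beta_reduce
      have hnorm : ‖f x • Real.exp (-⟪x, ξ⟫) • -(innerSL ℝ x : EuclideanSpace ℝ (Fin n) →L[ℝ] ℝ)‖
          ≤ |f x| * (Real.exp (-⟪x, ξ⟫) * ‖x‖) := by
        apply ContinuousLinearMap.opNorm_le_bound _ (by positivity)
        intro ν
        have h : (f x • Real.exp (-⟪x, ξ⟫) • -(innerSL ℝ x : EuclideanSpace ℝ (Fin n) →L[ℝ] ℝ)) ν
            = f x * (Real.exp (-⟪x, ξ⟫) * -(⟪x, ν⟫)) := rfl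
        rw [h, Real.norm_eq_abs, abs_mul, abs_mul, abs_neg, abs_of_pos (Real.exp_pos _)]
        calc |f x| * (Real.exp (-⟪x, ξ⟫) * |⟪x, ν⟫|)
            ≤ |f x| * (Real.exp (-⟪x, ξ⟫) * (‖x‖ * ‖ν‖)) :=
              mul_le_mul_of_nonneg_left (mul_le_mul_of_nonneg_left
                (abs_real_inner_le_norm x ν) (Real.exp_pos _).le) (abs_nonneg _)
          _ = |f x| * (Real.exp (-⟪x, ξ⟫) * ‖x‖) * ‖ν‖ := by ring
      refine hnorm.trans ?_
      have h6 : Real.exp (-⟪x, ξ⟫) ≤ Real.exp (-(c/2 * ‖x‖)) :=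
        Real.exp_le_exp.2 (neg_le_neg hip)
      calc |f x| * (Real.exp (-⟪x, ξ⟫) * ‖x‖)
          ≤ (M * ‖x‖ ^ d) * (Real.exp (-(c/2 * ‖x‖)) * ‖x‖) := by
            apply mul_le_mul (hfb x hx) _ (by positivity) (by positivity)
            exact mul_le_mul_of_nonneg_right h6 (norm_nonneg _)
        _ = M * ((‖x‖ ^ d * ‖x‖) * Real.exp (-(c/2 * ‖x‖))) := by ring
        _ = M * (‖x‖ ^ (d+1) * Real.exp (-(c/2 * ‖x‖))) := by rw [hrd x])
    (((aux_main_int hn (by linarith : (0:ℝ) ≤ d+1) (half_pos hc0)).const_mul M).restrict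
      (s := C))
    (by
      refine Filter.Eventually.of_forall (fun x => ?_)
      intro ξ hξ
      have h1 : HasFDerivAt (fun ξ : EuclideanSpace ℝ (Fin n) => ⟪x, ξ⟫) (innerSL ℝ x : EuclideanSpace ℝ (Fin n) →L[ℝ] ℝ) ξ :=
        (innerSL ℝ x).hasFDerivAt
      have h2 := (h1.neg).exp
      exact h2.mul_const (f x))
  -- rewrite the derivative
  have hderiv : (∫ x in C, f x • (Real.exp (-⟪x, ξ₀⟫) • -(innerSL ℝ x : EuclideanSpace ℝ (Fin n) →L[ℝ] ℝ)))
      = -(innerSL ℝ w) := by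
    have heq : (fun x : EuclideanSpace ℝ (Fin n) => f x • (Real.exp (-⟪x, ξ₀⟫) • -(innerSL ℝ x : EuclideanSpace ℝ (Fin n) →L[ℝ] ℝ)))
        = fun x : EuclideanSpace ℝ (Fin n) => -(innerSL ℝ ((Real.exp (-⟪x, ξ₀⟫) * f x) • x)) := by
      funext x
      rw [_root_.map_smul]
      ext ν
      simp [mul_comm]
      ring
    rw [heq, integral_neg, ContinuousLinearMap.integral_comp_comm (innerSL ℝ) hInt, ← hw]
  rw [hderiv] at main
  have hVeq : V = fun ξ : EuclideanSpace ℝ (Fin n) => ∫ x in C, Real.exp (-⟪x, ξ⟫) * f x := funext hV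
  rw [hVeq]
  exact main
end

section
/- Let n ≥ 1, let C ⊆ ℝⁿ be a closed cone (t • x ∈ C whenever t > 0 and x ∈ C), let d ≥ 0 be a real number, and let f : ℝⁿ → ℝ be continuous, positively homogeneous of degree d, and nonnegative on C. Define V : ℝⁿ → ℝ by V(ξ) = ∫_C exp(−⟨x, ξ⟩) · f(x) dx. Let ξ₀ ∈ ℝⁿ satisfy ⟨x, ξ₀⟩ > 0 for every x ∈ C with x ≠ 0, and assume V(ξ₀) > 0. Let b = V(ξ₀)⁻¹ • ∫_C exp(−⟨x, ξ₀⟩) · f(x) • x dx (the barycenter of the measure e^{−⟨·, ξ₀⟩} f dλ on C). Then the function ξ ↦ log V(ξ) is Fréchet-differentiable at ξ₀ with derivative the linear map ν ↦ −⟨b, ν⟩. -/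
set_option maxHeartbeats 1000000
set_option synthInstance.maxHeartbeats 400000

open MeasureTheory RealInnerProductSpace

private lemma key_poly_exp_ineq {p c : ℝ} (hp : 0 ≤ p) (hc : 0 < c) (n : ℕ) :
    ∃ K : ℝ, ∀ t : ℝ, 0 ≤ t →
      t ^ p * Real.exp (-(c * t)) ≤ K * (1 + t) ^ (-((n : ℝ) + 1)) := by
  obtain ⟨m, hm1, hm2⟩ : ∃ m : ℕ, p + ((n : ℝ) + 1) ≤ m ∧ c ≤ m := by
    obtain ⟨m, hm⟩ := exists_nat_ge (max (p + ((n : ℝ) + 1)) c)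
    exact ⟨m, le_trans (le_max_left _ _) hm, le_trans (le_max_right _ _) hm⟩
  have hm0 : (0 : ℝ) < m := lt_of_lt_of_le hc hm2
  refine ⟨((m : ℝ) / c) ^ m, fun t ht => ?_⟩
  have h1t : (0 : ℝ) < 1 + t := by linarith
  have key : t ^ p * Real.exp (-(c * t)) * (1 + t) ^ ((n : ℝ) + 1) ≤ ((m : ℝ) / c) ^ m := by
    have e1 : 1 + t ≤ ((m : ℝ) / c) * Real.exp (c * t / m) := by
      have hexp := Real.add_one_le_exp (c * t / m)
      have hmc : (1 : ℝ) ≤ (m : ℝ) / c := (one_le_div hc).2 hm2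
      calc 1 + t ≤ (m : ℝ) / c + t := by linarith
        _ = ((m : ℝ) / c) * (c * t / m + 1) := by field_simp; ring
        _ ≤ ((m : ℝ) / c) * Real.exp (c * t / m) := by
            apply mul_le_mul_of_nonneg_left hexp (by positivity)
    have e2 : (1 + t) ^ (m : ℕ) ≤ ((m : ℝ) / c) ^ m * Real.exp (c * t) := by
      calc (1 + t) ^ (m : ℕ) ≤ (((m : ℝ) / c) * Real.exp (c * t / m)) ^ m :=
            pow_le_pow_left₀ h1t.le e1 m
        _ = ((m : ℝ) / c) ^ m * (Real.exp (c * t / m)) ^ m := mul_pow _ _ _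
        _ = ((m : ℝ) / c) ^ m * Real.exp (c * t) := by
            rw [← Real.exp_nat_mul]
            congr 1
            field_simp
    have e3 : t ^ p * (1 + t) ^ ((n : ℝ) + 1) ≤ (1 + t) ^ (m : ℕ) := by
      calc t ^ p * (1 + t) ^ ((n : ℝ) + 1)
          ≤ (1 + t) ^ p * (1 + t) ^ ((n : ℝ) + 1) := by
            apply mul_le_mul_of_nonneg_right (Real.rpow_le_rpow ht (by linarith) hp)
              (Real.rpow_nonneg h1t.le _)
        _ = (1 + t) ^ (p + ((n : ℝ) + 1)) := (Real.rpow_add h1t _ _).symm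
        _ ≤ (1 + t) ^ ((m : ℕ) : ℝ) := Real.rpow_le_rpow_of_exponent_le (by linarith) hm1
        _ = (1 + t) ^ (m : ℕ) := Real.rpow_natCast _ _
    calc t ^ p * Real.exp (-(c * t)) * (1 + t) ^ ((n : ℝ) + 1)
        = t ^ p * (1 + t) ^ ((n : ℝ) + 1) * Real.exp (-(c * t)) := by ring
      _ ≤ ((m : ℝ) / c) ^ m * Real.exp (c * t) * Real.exp (-(c * t)) := by
          apply mul_le_mul_of_nonneg_right (e3.trans e2) (Real.exp_nonneg _)
      _ = ((m : ℝ) / c) ^ m := by rw [mul_assoc, ← Real.exp_add]; simp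
  have hpow : (0 : ℝ) < (1 + t) ^ ((n : ℝ) + 1) := Real.rpow_pos_of_pos h1t _
  have h := (le_div_iff₀ hpow).mpr key
  rwa [div_eq_mul_inv, ← Real.rpow_neg h1t.le] at h

private lemma aux_integrable (n : ℕ) {p c : ℝ} (hp : 0 ≤ p) (hc : 0 < c) :
    Integrable (fun x : EuclideanSpace ℝ (Fin n) => ‖x‖ ^ p * Real.exp (-(c * ‖x‖))) := by
  obtain ⟨K, hK⟩ := key_poly_exp_ineq hp hc n
  have hnr : (Module.finrank ℝ (EuclideanSpace ℝ (Fin n)) : ℝ) < (n : ℝ) + 1 := by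
    rw [finrank_euclideanSpace_fin]; linarith
  refine ((integrable_one_add_norm hnr).const_mul K).mono'
    ?_ (Filter.Eventually.of_forall fun x => ?_)
  · exact ((continuous_norm.rpow_const fun x => Or.inr hp).mul
      (Real.continuous_exp.comp (continuous_const.mul continuous_norm).neg)).aestronglyMeasurable
  · rw [Real.norm_of_nonneg (by positivity)]
    exact hK _ (norm_nonneg x)

theorem log_weighted_volume_hasFDerivAt_barycenter
    (n : ℕ) (hn : 1 ≤ n)
    (C : Set (EuclideanSpace ℝ (Fin n)))
    (hCclosed : IsClosed C)
    (hCcone : ∀ t : ℝ, 0 < t → ∀ x ∈ C, t • x ∈ C)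
    (d : ℝ) (hd : 0 ≤ d)
    (f : EuclideanSpace ℝ (Fin n) → ℝ)
    (hf : Continuous f)
    (hhom : ∀ t : ℝ, 0 < t → ∀ x, f (t • x) = t ^ d * f x)
    (hfnonneg : ∀ x ∈ C, 0 ≤ f x)
    (V : EuclideanSpace ℝ (Fin n) → ℝ)
    (hV : ∀ ξ, V ξ = ∫ x in C, Real.exp (-⟪x, ξ⟫) * f x)
    (ξ₀ : EuclideanSpace ℝ (Fin n))
    (hξ₀ : ∀ x ∈ C, x ≠ 0 → 0 < ⟪x, ξ₀⟫)
    (hVpos : 0 < V ξ₀)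
    (b : EuclideanSpace ℝ (Fin n))
    (hb : b = (V ξ₀)⁻¹ • ∫ x in C, (Real.exp (-⟪x, ξ₀⟫) * f x) • x) :
    HasFDerivAt (fun ξ => Real.log (V ξ)) (-(innerSL ℝ b)) ξ₀ := by
  haveI : Nonempty (Fin n) := ⟨⟨0, hn⟩⟩
  haveI : Nontrivial (EuclideanSpace ℝ (Fin n)) := by
    refine ⟨⟨0, EuclideanSpace.single ⟨0, hn⟩ 1, fun h => ?_⟩⟩
    have := congrArg (fun v => v ⟨0, hn⟩) h
    simp at this
  set μ : Measure (EuclideanSpace ℝ (Fin n)) := volume.restrict C with hμdef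
  -- the spherical part of the cone is nonempty
  have hSne : (C ∩ Metric.sphere 0 1).Nonempty := by
    rcases Set.eq_empty_or_nonempty (C ∩ Metric.sphere 0 1) with he | hne
    · exfalso
      have hsub : C ⊆ {0} := by
        intro x hx
        by_contra hx0
        have hxn : 0 < ‖x‖ := norm_pos_iff.2 hx0
        have hmem : ‖x‖⁻¹ • x ∈ C ∩ Metric.sphere 0 1 :=
          ⟨hCcone _ (inv_pos.2 hxn) x hx, by
            rw [mem_sphere_zero_iff_norm, norm_smul, norm_inv, norm_norm,
              inv_mul_cancel₀ hxn.ne']⟩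
        rw [he] at hmem
        exact hmem
      have hC0 : volume C = 0 :=
        measure_mono_null hsub (measure_singleton 0)
      have : V ξ₀ = 0 := by
        rw [hV ξ₀, hμdef, Measure.restrict_eq_zero.mpr hC0, integral_zero_measure]
      linarith
    · exact hne
  have hScpt : IsCompact (C ∩ Metric.sphere 0 1) :=
    (isCompact_sphere 0 1).inter_left hCclosed
  -- lower bound for the inner product on the cone
  obtain ⟨z, hz, hzmin'⟩ := hScpt.exists_isMinOn hSne
    ((continuous_id.inner continuous_const).continuousOn :
      ContinuousOn (fun x : EuclideanSpace ℝ (Fin n) => ⟪x, ξ₀⟫) _)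
  have hzmin := isMinOn_iff.mp hzmin'
  simp only [id_eq] at hzmin
  have hzne : z ≠ 0 := by
    intro h
    have := hz.2
    rw [h, mem_sphere_zero_iff_norm, norm_zero] at this
    norm_num at this
  set ε : ℝ := ⟪z, ξ₀⟫ with hεdef
  have hε : 0 < ε := hξ₀ z hz.1 hzne
  have hεb : ∀ x ∈ C, ε * ‖x‖ ≤ ⟪x, ξ₀⟫ := by
    intro x hx
    rcases eq_or_ne x 0 with rfl | hx0
    · simp
    · have hxn : 0 < ‖x‖ := norm_pos_iff.2 hx0
      have hu : ‖x‖⁻¹ • x ∈ C ∩ Metric.sphere 0 1 :=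
        ⟨hCcone _ (inv_pos.2 hxn) x hx, by
          rw [mem_sphere_zero_iff_norm, norm_smul, norm_inv, norm_norm,
            inv_mul_cancel₀ hxn.ne']⟩
      have hle := hzmin _ hu
      rw [real_inner_smul_left] at hle
      calc ε * ‖x‖ ≤ (‖x‖⁻¹ * ⟪x, ξ₀⟫) * ‖x‖ := mul_le_mul_of_nonneg_right hle hxn.le
        _ = ⟪x, ξ₀⟫ := by field_simp
  -- upper bound for f on the cone
  obtain ⟨zM, hzM, hzMmax'⟩ := hScpt.exists_isMaxOn hSne hf.continuousOn
  have hzMmax := isMaxOn_iff.mp hzMmax'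
  set M : ℝ := f zM with hMdef
  have hM0 : 0 ≤ M := hfnonneg _ hzM.1
  have hMb : ∀ x ∈ C, x ≠ 0 → f x ≤ M * ‖x‖ ^ d := by
    intro x hx hx0
    have hxn : 0 < ‖x‖ := norm_pos_iff.2 hx0
    have hxx : ‖x‖ • (‖x‖⁻¹ • x) = x := by
      rw [smul_smul, mul_inv_cancel₀ hxn.ne', one_smul]
    have hu : ‖x‖⁻¹ • x ∈ C ∩ Metric.sphere 0 1 :=
      ⟨hCcone _ (inv_pos.2 hxn) x hx, by
        rw [mem_sphere_zero_iff_norm, norm_smul, norm_inv, norm_norm,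
          inv_mul_cancel₀ hxn.ne']⟩
    have hfx : f x = ‖x‖ ^ d * f (‖x‖⁻¹ • x) := by
      conv_lhs => rw [← hxx]
      exact hhom ‖x‖ hxn _
    rw [hfx, mul_comm M]
    exact mul_le_mul_of_nonneg_left (hzMmax _ hu) (Real.rpow_nonneg hxn.le _)
  -- almost-everywhere membership
  have hae : ∀ᵐ x ∂μ, x ∈ C ∧ x ≠ 0 := by
    rw [hμdef]
    refine (ae_restrict_mem hCclosed.measurableSet).and (ae_restrict_of_ae ?_)
    have hset : {x : EuclideanSpace ℝ (Fin n) | ¬x ≠ 0} = {0} := by ext x; simp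
    rw [ae_iff, hset]
    exact measure_singleton 0
  -- the dominating function for the derivative
  set bound : EuclideanSpace ℝ (Fin n) → ℝ :=
    fun x => M * (‖x‖ ^ (d + 1) * Real.exp (-(ε / 2 * ‖x‖))) with hbddef
  have bound_integrable : Integrable bound μ := by
    rw [hμdef]
    exact ((aux_integrable n (by linarith : (0:ℝ) ≤ d + 1) (half_pos hε)).const_mul M).restrict
  -- pointwise bound for the derivative integrand
  have hptb : ∀ x ∈ C, x ≠ 0 → ∀ ξ ∈ Metric.ball ξ₀ (ε / 2),
      Real.exp (-⟪x, ξ⟫) * f x * ‖x‖ ≤ bound x := by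
    intro x hxC hx0 ξ hξ
    have hxn : 0 < ‖x‖ := norm_pos_iff.2 hx0
    have hip : ε / 2 * ‖x‖ ≤ ⟪x, ξ⟫ := by
      have h1 : ε * ‖x‖ ≤ ⟪x, ξ₀⟫ := hεb x hxC
      have h2 : |⟪x, ξ - ξ₀⟫| ≤ ‖x‖ * ‖ξ - ξ₀‖ := abs_real_inner_le_norm x _
      have h3 : ‖ξ - ξ₀‖ ≤ ε / 2 :=
        le_of_lt (by rwa [Metric.mem_ball, dist_eq_norm] at hξ)
      have h4 : ⟪x, ξ⟫ = ⟪x, ξ₀⟫ + ⟪x, ξ - ξ₀⟫ := by rw [inner_sub_right]; ring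
      have h5 : ‖x‖ * ‖ξ - ξ₀‖ ≤ ‖x‖ * (ε / 2) :=
        mul_le_mul_of_nonneg_left h3 (norm_nonneg x)
      have h6 := (abs_le.1 h2).1
      nlinarith
    calc Real.exp (-⟪x, ξ⟫) * f x * ‖x‖
        ≤ Real.exp (-(ε / 2 * ‖x‖)) * (M * ‖x‖ ^ d) * ‖x‖ := by
          apply mul_le_mul_of_nonneg_right _ (norm_nonneg x)
          exact mul_le_mul (Real.exp_le_exp.2 (by linarith)) (hMb x hxC hx0)
            (hfnonneg x hxC) (Real.exp_nonneg _)
      _ = bound x := by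
          rw [hbddef]
          dsimp only
          rw [Real.rpow_add_one hxn.ne']
          ring
  -- continuity facts
  have hcontF : ∀ ξ, Continuous fun x : EuclideanSpace ℝ (Fin n) =>
      Real.exp (-⟪x, ξ⟫) * f x :=
    fun ξ => (Real.continuous_exp.comp (continuous_id.inner continuous_const).neg).mul hf
  have hcontF' : Continuous fun x : EuclideanSpace ℝ (Fin n) =>
      (Real.exp (-⟪x, ξ₀⟫) * f x) • (-(innerSL ℝ x)) :=
    (hcontF ξ₀).smul (innerSL ℝ).continuous.neg
  -- integrability of F ξ₀
  have hF_int : Integrable (fun x => Real.exp (-⟪x, ξ₀⟫) * f x) μ := by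
    have hbase : Integrable (fun x : EuclideanSpace ℝ (Fin n) =>
        M * (‖x‖ ^ d * Real.exp (-(ε * ‖x‖)))) μ := by
      rw [hμdef]
      exact ((aux_integrable n hd hε).const_mul M).restrict
    refine hbase.mono' (hcontF ξ₀).aestronglyMeasurable (hae.mono ?_)
    rintro x ⟨hxC, hx0⟩
    rw [Real.norm_of_nonneg (mul_nonneg (Real.exp_nonneg _) (hfnonneg x hxC))]
    calc Real.exp (-⟪x, ξ₀⟫) * f x
        ≤ Real.exp (-(ε * ‖x‖)) * (M * ‖x‖ ^ d) :=
          mul_le_mul (Real.exp_le_exp.2 (by have := hεb x hxC; linarith))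
            (hMb x hxC hx0) (hfnonneg x hxC) (Real.exp_nonneg _)
      _ = M * (‖x‖ ^ d * Real.exp (-(ε * ‖x‖))) := by ring
  -- the bound on F'
  have h_bound : ∀ᵐ x ∂μ, ∀ ξ ∈ Metric.ball ξ₀ (ε / 2),
      ‖(Real.exp (-⟪x, ξ⟫) * f x) • (-(innerSL ℝ x))‖ ≤ bound x := by
    refine hae.mono ?_
    rintro x ⟨hxC, hx0⟩ ξ hξ
    rw [norm_smul (Real.exp (-⟪x, ξ⟫) * f x) (-(innerSL ℝ x)), norm_neg, innerSL_apply_norm,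
      Real.norm_of_nonneg (mul_nonneg (Real.exp_nonneg _) (hfnonneg x hxC))]
    exact hptb x hxC hx0 ξ hξ
  -- differentiation under the integral sign
  have main : HasFDerivAt (fun ξ => ∫ x, Real.exp (-⟪x, ξ⟫) * f x ∂μ)
      (∫ x, (Real.exp (-⟪x, ξ₀⟫) * f x) • (-(innerSL ℝ x)) ∂μ) ξ₀ := by
    refine hasFDerivAt_integral_of_dominated_of_fderiv_le
      (F' := fun ξ x => (Real.exp (-⟪x, ξ⟫) * f x) • (-(innerSL ℝ x)))
      (bound := bound) (Metric.ball_mem_nhds ξ₀ (half_pos hε))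
      (Filter.Eventually.of_forall fun ξ => (hcontF ξ).aestronglyMeasurable)
      hF_int hcontF'.aestronglyMeasurable h_bound bound_integrable
      (Filter.Eventually.of_forall fun x ξ hξ => ?_)
    have h1 : HasFDerivAt (fun ξ : EuclideanSpace ℝ (Fin n) => (⟪x, ξ⟫ : ℝ))
        (innerSL ℝ x) ξ := (innerSL ℝ x).hasFDerivAt
    have h3 := (h1.neg.exp).mul_const (f x)
    show HasFDerivAt (fun ξ => Real.exp (-⟪x, ξ⟫) * f x)
      ((Real.exp (-⟪x, ξ⟫) * f x) • (-(innerSL ℝ x))) ξ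
    have heq2 : (Real.exp (-⟪x, ξ⟫) * f x) • (-(innerSL ℝ x))
        = f x • Real.exp (-⟪x, ξ⟫) • (-(innerSL ℝ x)) := by
      rw [smul_smul (f x) (Real.exp (-⟪x, ξ⟫)) (-(innerSL ℝ x)), mul_comm (f x) (Real.exp (-⟪x, ξ⟫))]
    rw [heq2]
    exact h3
  -- rewrite in terms of V
  have hVfun : (fun ξ => ∫ x, Real.exp (-⟪x, ξ⟫) * f x ∂μ) = V :=
    funext fun ξ => (hV ξ).symm
  rw [hVfun] at main
  have hlog := main.log hVpos.ne'
  -- identify the derivative with the barycenter functional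
  have hF'int : Integrable (fun x => (Real.exp (-⟪x, ξ₀⟫) * f x) • (-(innerSL ℝ x))) μ := by
    refine bound_integrable.mono' hcontF'.aestronglyMeasurable (hae.mono ?_)
    rintro x ⟨hxC, hx0⟩
    rw [norm_smul (Real.exp (-⟪x, ξ₀⟫) * f x) (-(innerSL ℝ x)), norm_neg, innerSL_apply_norm,
      Real.norm_of_nonneg (mul_nonneg (Real.exp_nonneg _) (hfnonneg x hxC))]
    exact hptb x hxC hx0 ξ₀ (Metric.mem_ball_self (half_pos hε))
  have hwint : Integrable (fun x => (Real.exp (-⟪x, ξ₀⟫) * f x) • x) μ := by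
    refine bound_integrable.mono' (((hcontF ξ₀).smul continuous_id).aestronglyMeasurable)
      (hae.mono ?_)
    rintro x ⟨hxC, hx0⟩
    rw [norm_smul, Real.norm_of_nonneg (mul_nonneg (Real.exp_nonneg _) (hfnonneg x hxC))]
    exact hptb x hxC hx0 ξ₀ (Metric.mem_ball_self (half_pos hε))
  have heq : (V ξ₀)⁻¹ • (∫ x, (Real.exp (-⟪x, ξ₀⟫) * f x) • (-(innerSL ℝ x)) ∂μ)
      = -(innerSL ℝ b) := by
    ext ν
    simp only [ContinuousLinearMap.smul_apply, ContinuousLinearMap.neg_apply, innerSL_apply_apply,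
      smul_eq_mul]
    rw [ContinuousLinearMap.integral_apply hF'int]
    have hpt : ∀ x : EuclideanSpace ℝ (Fin n),
        ((Real.exp (-⟪x, ξ₀⟫) * f x) • (-(innerSL ℝ x))) ν
          = -((Real.exp (-⟪x, ξ₀⟫) * f x) * ⟪x, ν⟫) := by
      intro x
      simp only [ContinuousLinearMap.smul_apply, ContinuousLinearMap.neg_apply,
        innerSL_apply_apply, smul_eq_mul]
      ring
    simp only [hpt]
    rw [integral_neg, hb, real_inner_smul_left]
    have hinner : ⟪(∫ x, (Real.exp (-⟪x, ξ₀⟫) * f x) • x ∂μ), ν⟫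
        = ∫ x, (Real.exp (-⟪x, ξ₀⟫) * f x) * ⟪x, ν⟫ ∂μ := by
      rw [real_inner_comm, ← integral_inner hwint]
      congr 1
      ext x
      rw [real_inner_smul_right, real_inner_comm ν x]
    rw [hinner]
    ring
  rw [← heq]
  exact hlog
end

section
/- For every real number t > 0, the integral ∫_{−2/(t+2)}^{2/(2t+3)} p·(2 − (2t+3)p)·(6 + (3t+6)p)·(8 + (t+3)p)·(10 − t·p)·(12 − (3t+3)p)·(18 + 3p) dp is nonzero. -/
set_option maxHeartbeats 2000000 in
theorem g2_duistermaat_heckman_integral_ne_zero :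
    ∀ t : ℝ, 0 < t →
      (∫ p in (-2 / (t + 2))..(2 / (2 * t + 3)),
        p * (2 - (2 * t + 3) * p) * (6 + (3 * t + 6) * p) * (8 + (t + 3) * p) *
          (10 - t * p) * (12 - (3 * t + 3) * p) * (18 + 3 * p)) ≠ 0 := by
  intro t ht
  have h2 : (0:ℝ) < t + 2 := by linarith
  have h3 : (0:ℝ) < 2 * t + 3 := by linarith
  set c2 : ℝ := 103680 with hc2
  set c3 : ℝ := -14400 - 50112 * t with hc3
  set c4 : ℝ := -89100 - 101520 * t - 21060 * t ^ 2 with hc4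
  set c5 : ℝ := -17280 - 2592 * t + 14688 * t ^ 2 + 5184 * t ^ 3 with hc5
  set c6 : ℝ := 4050 + 14040 * t + 12960 * t ^ 2 + 3960 * t ^ 3 + 270 * t ^ 4 with hc6
  set c7 : ℝ := (4860 + 9720 * t + 3240 * t ^ 2 - 3240 * t ^ 3 - 2160 * t ^ 4 - 324 * t ^ 5) / 7
    with hc7
  set c8 : ℝ := -(486 * t + 1215 * t ^ 2 + 1080 * t ^ 3 + 405 * t ^ 4 + 54 * t ^ 5) / 8 with hc8
  set F : ℝ → ℝ := fun p => c2 * p ^ 2 + c3 * p ^ 3 + c4 * p ^ 4 + c5 * p ^ 5 + c6 * p ^ 6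
    + c7 * p ^ 7 + c8 * p ^ 8 with hF
  have hderiv : ∀ x : ℝ, HasDerivAt F
      (x * (2 - (2 * t + 3) * x) * (6 + (3 * t + 6) * x) * (8 + (t + 3) * x) *
        (10 - t * x) * (12 - (3 * t + 3) * x) * (18 + 3 * x)) x := by
    intro x
    have h := (((((((hasDerivAt_pow 2 x).const_mul c2).add
      ((hasDerivAt_pow 3 x).const_mul c3)).add
      ((hasDerivAt_pow 4 x).const_mul c4)).add
      ((hasDerivAt_pow 5 x).const_mul c5)).add
      ((hasDerivAt_pow 6 x).const_mul c6)).add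
      ((hasDerivAt_pow 7 x).const_mul c7)).add
      ((hasDerivAt_pow 8 x).const_mul c8)
    refine h.congr_deriv ?_
    simp only [hc2, hc3, hc4, hc5, hc6, hc7, hc8]
    push_cast
    ring
  have hint : (∫ p in (-2 / (t + 2))..(2 / (2 * t + 3)),
        p * (2 - (2 * t + 3) * p) * (6 + (3 * t + 6) * p) * (8 + (t + 3) * p) *
          (10 - t * p) * (12 - (3 * t + 3) * p) * (18 + 3 * p))
      = F (2 / (2 * t + 3)) - F (-2 / (t + 2)) := by
    apply intervalIntegral.integral_eq_sub_of_hasDerivAt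
    · intro x _; exact hderiv x
    · apply Continuous.intervalIntegrable
      continuity
  rw [hint]
  have hQ : (0:ℝ) < 1113750000 + 10301343750 * t + 43739746875 * t ^ 2
      + 113236725000 * t ^ 3 + 199995466875 * t ^ 4 + 255218267950 * t ^ 5
      + 242900287990 * t ^ 6 + 175278833152 * t ^ 7 + 96425512494 * t ^ 8
      + 40263742818 * t ^ 9 + 12567086847 * t ^ 10 + 2844060984 * t ^ 11
      + 441295047 * t ^ 12 + 42032682 * t ^ 13 + 1854576 * t ^ 14 := by positivity
  have hval : F (2 / (2 * t + 3)) - F (-2 / (t + 2))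
      = -(288 * (1113750000 + 10301343750 * t + 43739746875 * t ^ 2
      + 113236725000 * t ^ 3 + 199995466875 * t ^ 4 + 255218267950 * t ^ 5
      + 242900287990 * t ^ 6 + 175278833152 * t ^ 7 + 96425512494 * t ^ 8
      + 40263742818 * t ^ 9 + 12567086847 * t ^ 10 + 2844060984 * t ^ 11
      + 441295047 * t ^ 12 + 42032682 * t ^ 13 + 1854576 * t ^ 14))
      / (7 * (t + 2) ^ 8 * (2 * t + 3) ^ 8) := by
    simp only [hF, hc2, hc3, hc4, hc5, hc6, hc7, hc8]
    field_simp
    ring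
  rw [hval]
  apply ne_of_lt
  apply div_neg_of_neg_of_pos
  · linarith
  · positivity
end
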